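/- arXiv:1607.08440 — 6 statements merged into one kernel-verified Lean document; each statement's English description precedes it below -/
import Mathlib

section
/- Let x_e ∈ Ω be a non-degenerate regular equilibrium of X, with multiplier λ_e = (λ₁ᵉ,…,λ_{n−2}ᵉ) ∈ ℝ^{n−2}. Then there exist an open neighborhood V ⊆ ℝ^{n−2} of λ_e, an open neighborhood U ⊆ Ω of x_e, and a C^∞ map x̄ : V → U with x̄(λ_e) = x_e, such that for every λ = (λ₁,…,λ_{n−2}) ∈ V the point x̄(λ) is a non-degenerate regular equilibrium of X with multiplier λ; that is: ν(x̄(λ)) ≠ 0, the vectors ∇C₁(x̄(λ)), …, ∇C_{n−2}(x̄(λ)) are linearly independent, ∇H(x̄(λ)) + λ₁∇C₁(x̄(λ)) + ⋯ + λ_{n−2}∇C_{n−2}(x̄(λ)) = 0, and the Hessian matrix of F_λ := H + λ₁C₁ + ⋯ + λ_{n−2}C_{n−2} at x̄(λ) is invertible. -/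
open Matrix

/-- Coordinate gradient of `f : ℝⁿ → ℝ` at `x`. -/
noncomputable def grad {n : ℕ} (f : (Fin n → ℝ) → ℝ) (x : Fin n → ℝ) : Fin n → ℝ :=
  fun i => fderiv ℝ f x (Pi.single i 1)

/-- Hessian matrix of `f : ℝⁿ → ℝ` at `x`. -/
noncomputable def hess {n : ℕ} (f : (Fin n → ℝ) → ℝ) (x : Fin n → ℝ) :
    Matrix (Fin n) (Fin n) ℝ :=
  Matrix.of fun i j => fderiv ℝ (fun y => fderiv ℝ f y (Pi.single j 1)) x (Pi.single i 1)

/-- Jacobian matrix of a map `Φ : ℝⁿ → ℝⁿ` at `x`. -/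
noncomputable def jac {n : ℕ} (Φ : (Fin n → ℝ) → (Fin n → ℝ)) (x : Fin n → ℝ) :
    Matrix (Fin n) (Fin n) ℝ :=
  Matrix.of fun i j => fderiv ℝ (fun y => Φ y i) x (Pi.single j 1)

/-- The completely integrable vector field `X_i(x) = ν(x) · det M_i(x)`, where the rows of
`M_i(x)` are `∇C₁(x), …, ∇C_{n−2}(x)`, the `i`-th standard basis vector, and `∇H(x)`. -/
noncomputable def vecX {n : ℕ} (ν : (Fin n → ℝ) → ℝ) (C : Fin (n - 2) → (Fin n → ℝ) → ℝ)
    (H : (Fin n → ℝ) → ℝ) (x : Fin n → ℝ) : Fin n → ℝ :=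
  fun i => ν x * Matrix.det (Matrix.of fun k l : Fin n =>
    if hk : (k : ℕ) < n - 2 then grad (C ⟨k, hk⟩) x l
    else if (k : ℕ) = n - 2 then (Pi.single i (1:ℝ) : Fin n → ℝ) l
    else grad H x l)

/-- The function `F_λ = H + λ₁C₁ + ⋯ + λ_{n−2}C_{n−2}`. -/
noncomputable def Flam {n : ℕ} (C : Fin (n - 2) → (Fin n → ℝ) → ℝ) (H : (Fin n → ℝ) → ℝ)
    (lam : Fin (n - 2) → ℝ) : (Fin n → ℝ) → ℝ :=
  fun x => H x + ∑ i, lam i * C i x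

/-- `x_e` is a non-degenerate regular equilibrium of `X` with multiplier `λ`. -/
def IsNDRegEquilibrium {n : ℕ} (ν : (Fin n → ℝ) → ℝ) (C : Fin (n - 2) → (Fin n → ℝ) → ℝ)
    (H : (Fin n → ℝ) → ℝ) (x_e : Fin n → ℝ) (lam : Fin (n - 2) → ℝ) : Prop :=
  ν x_e ≠ 0 ∧
  LinearIndependent ℝ (fun i : Fin (n - 2) => grad (C i) x_e) ∧
  (grad H x_e + ∑ i, lam i • grad (C i) x_e) = 0 ∧
  (hess (Flam C H lam) x_e).det ≠ 0

/-- The scalar quantity `I_X(x_e)`. -/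
noncomputable def scalarI {n : ℕ} (ν : (Fin n → ℝ) → ℝ) (C : Fin (n - 2) → (Fin n → ℝ) → ℝ)
    (H : (Fin n → ℝ) → ℝ) (x_e : Fin n → ℝ) (lam : Fin (n - 2) → ℝ) : ℝ :=
  (ν x_e) ^ 2 * (hess (Flam C H lam) x_e).det *
    Matrix.det (Matrix.of fun i j : Fin (n - 2) =>
      ((hess (Flam C H lam) x_e)⁻¹ *ᵥ grad (C i) x_e) ⬝ᵥ grad (C j) x_e)

/-- Lyapunov stability of an equilibrium `p` of the vector field `X` on the open set `Ω`. -/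
def LyapunovStable {n : ℕ} (Ω : Set (Fin n → ℝ)) (X : (Fin n → ℝ) → (Fin n → ℝ))
    (p : Fin n → ℝ) : Prop :=
  ∀ U : Set (Fin n → ℝ), U ⊆ Ω → IsOpen U → p ∈ U →
    ∃ V : Set (Fin n → ℝ), V ⊆ U ∧ IsOpen V ∧ p ∈ V ∧
      ∀ f : ℝ → (Fin n → ℝ), f 0 ∈ V → (∀ t : ℝ, 0 ≤ t → f t ∈ Ω) →
        (∀ t : ℝ, 0 ≤ t → HasDerivWithinAt f (X (f t)) (Set.Ici 0) t) →
        ∀ t : ℝ, 0 ≤ t → f t ∈ U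

section Helpers

lemma contDiffOn_fderiv_apply {m : ℕ} {Ω : Set (Fin m → ℝ)} (hΩ : IsOpen Ω)
    {f : (Fin m → ℝ) → ℝ} (hf : ContDiffOn ℝ (⊤ : ℕ∞) f Ω) (v : Fin m → ℝ) :
    ContDiffOn ℝ (⊤ : ℕ∞) (fun x => fderiv ℝ f x v) Ω := by
  have h1 : ContDiffOn ℝ (⊤ : ℕ∞) (fderiv ℝ f) Ω := hf.fderiv_of_isOpen hΩ (by simp)
  exact (ContinuousLinearMap.apply ℝ ℝ v).contDiff.comp_contDiffOn h1

lemma fderiv_lincomb {m k : ℕ} {H : (Fin m → ℝ) → ℝ} {C : Fin k → (Fin m → ℝ) → ℝ}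
    (lam : Fin k → ℝ) {x : Fin m → ℝ}
    (hH : DifferentiableAt ℝ H x) (hC : ∀ i, DifferentiableAt ℝ (C i) x) :
    fderiv ℝ (fun y => H y + ∑ i, lam i * C i y) x
      = fderiv ℝ H x + ∑ i, lam i • fderiv ℝ (C i) x := by
  exact HasFDerivAt.fderiv (hH.hasFDerivAt.add
    (HasFDerivAt.fun_sum (fun i (_ : i ∈ Finset.univ) => ((hC i).hasFDerivAt.const_mul (lam i)))))

variable {n : ℕ} {Ω : Set (Fin n → ℝ)} {C : Fin (n-2) → (Fin n → ℝ) → ℝ} {H : (Fin n → ℝ) → ℝ}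

lemma grad_Flam (hΩ : IsOpen Ω) (hC : ∀ i, ContDiffOn ℝ (⊤ : ℕ∞) (C i) Ω) (hH : ContDiffOn ℝ (⊤ : ℕ∞) H Ω)
    (lam : Fin (n-2) → ℝ) {x : Fin n → ℝ} (hx : x ∈ Ω) :
    grad (Flam C H lam) x = grad H x + ∑ i, lam i • grad (C i) x := by
  have hHd : DifferentiableAt ℝ H x :=
    (hH.contDiffAt (hΩ.mem_nhds hx)).differentiableAt (by simp)
  have hCd : ∀ i, DifferentiableAt ℝ (C i) x := fun i =>
    ((hC i).contDiffAt (hΩ.mem_nhds hx)).differentiableAt (by simp)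
  funext j
  show fderiv ℝ (Flam C H lam) x (Pi.single j 1) = _
  rw [show Flam C H lam = fun y => H y + ∑ i, lam i * C i y from rfl,
    fderiv_lincomb lam hHd hCd]
  simp [grad, Finset.sum_apply]

lemma hess_Flam (hΩ : IsOpen Ω) (hC : ∀ i, ContDiffOn ℝ (⊤ : ℕ∞) (C i) Ω) (hH : ContDiffOn ℝ (⊤ : ℕ∞) H Ω)
    (lam : Fin (n-2) → ℝ) {x : Fin n → ℝ} (hx : x ∈ Ω) :
    hess (Flam C H lam) x = hess H x + ∑ i, lam i • hess (C i) x := by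
  funext i j
  have hHd : ∀ y ∈ Ω, DifferentiableAt ℝ H y := fun y hy =>
    (hH.contDiffAt (hΩ.mem_nhds hy)).differentiableAt (by simp)
  have hCd : ∀ k, ∀ y ∈ Ω, DifferentiableAt ℝ (C k) y := fun k y hy =>
    ((hC k).contDiffAt (hΩ.mem_nhds hy)).differentiableAt (by simp)
  have heq : ∀ y ∈ Ω, fderiv ℝ (Flam C H lam) y (Pi.single j 1)
      = fderiv ℝ H y (Pi.single j 1) + ∑ k, lam k * fderiv ℝ (C k) y (Pi.single j 1) := by
    intro y hy
    rw [show (Flam C H lam) = fun y => H y + ∑ k, lam k * C k y from rfl,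
      fderiv_lincomb lam (hHd y hy) (fun k => hCd k y hy)]
    simp [Finset.sum_apply]
  have hev : (fun y => fderiv ℝ (Flam C H lam) y (Pi.single j 1))
      =ᶠ[nhds x] (fun y => fderiv ℝ H y (Pi.single j 1)
        + ∑ k, lam k * fderiv ℝ (C k) y (Pi.single j 1)) := by
    filter_upwards [hΩ.mem_nhds hx] with y hy using heq y hy
  have hHd2 : DifferentiableAt ℝ (fun y => fderiv ℝ H y (Pi.single j 1)) x :=
    ((contDiffOn_fderiv_apply hΩ hH _).contDiffAt (hΩ.mem_nhds hx)).differentiableAt (by simp)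
  have hCd2 : ∀ k, DifferentiableAt ℝ (fun y => fderiv ℝ (C k) y (Pi.single j 1)) x := fun k =>
    ((contDiffOn_fderiv_apply hΩ (hC k) _).contDiffAt (hΩ.mem_nhds hx)).differentiableAt (by simp)
  simp only [hess, Matrix.of_apply, Matrix.add_apply, Matrix.sum_apply, Matrix.smul_apply,
    smul_eq_mul]
  rw [hev.fderiv_eq, fderiv_lincomb lam hHd2 hCd2]
  simp [Finset.sum_apply]

lemma clm_eval_eq_sum {m : ℕ} (L : (Fin m → ℝ) →L[ℝ] ℝ) (v : Fin m → ℝ) :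
    L v = ∑ i, v i * L (Pi.single i 1) := by
  have hv : v = ∑ i, v i • (Pi.single i 1 : Fin m → ℝ) := by
    funext j
    simp [Finset.sum_apply, Pi.single_apply]
  conv_lhs => rw [hv]
  rw [map_sum]
  simp [smul_eq_mul]

/-- The auxiliary map for the implicit function theorem. -/
noncomputable def PhiMap {n : ℕ} (C : Fin (n-2) → (Fin n → ℝ) → ℝ) (H : (Fin n → ℝ) → ℝ) :
    ((Fin (n-2) → ℝ) × (Fin n → ℝ)) → ((Fin (n-2) → ℝ) × (Fin n → ℝ)) :=
  fun p => (p.1, grad H p.2 + ∑ k, p.1 k • grad (C k) p.2)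

lemma contDiffOn_G (hΩ : IsOpen Ω) (hC : ∀ i, ContDiffOn ℝ (⊤ : ℕ∞) (C i) Ω)
    (hH : ContDiffOn ℝ (⊤ : ℕ∞) H Ω) :
    ContDiffOn ℝ (⊤ : ℕ∞) (fun p : (Fin (n-2) → ℝ) × (Fin n → ℝ) =>
      grad H p.2 + ∑ k, p.1 k • grad (C k) p.2) (Set.univ ×ˢ Ω) := by
  have hmap : Set.MapsTo (Prod.snd) (Set.univ ×ˢ Ω : Set ((Fin (n-2) → ℝ) × (Fin n → ℝ))) Ω :=
    fun p hp => hp.2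
  have heq : (fun p : (Fin (n-2) → ℝ) × (Fin n → ℝ) =>
      grad H p.2 + ∑ k, p.1 k • grad (C k) p.2)
      = fun p => fun j => fderiv ℝ H p.2 (Pi.single j 1)
        + ∑ k, p.1 k * fderiv ℝ (C k) p.2 (Pi.single j 1) := by
    funext p j
    simp [grad, Finset.sum_apply]
  rw [heq]
  apply contDiffOn_pi.2
  intro j
  apply ContDiffOn.add
  · exact (contDiffOn_fderiv_apply hΩ hH _).comp contDiff_snd.contDiffOn hmap
  · apply ContDiffOn.sum
    intro k _
    apply ContDiffOn.mul
    · exact (((ContinuousLinearMap.proj k).comp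
        (ContinuousLinearMap.fst ℝ (Fin (n-2) → ℝ) (Fin n → ℝ))).contDiff).contDiffOn
    · exact (contDiffOn_fderiv_apply hΩ (hC k) _).comp contDiff_snd.contDiffOn hmap

lemma contDiffOn_PhiMap (hΩ : IsOpen Ω) (hC : ∀ i, ContDiffOn ℝ (⊤ : ℕ∞) (C i) Ω)
    (hH : ContDiffOn ℝ (⊤ : ℕ∞) H Ω) :
    ContDiffOn ℝ (⊤ : ℕ∞) (PhiMap C H) (Set.univ ×ˢ Ω) :=
  contDiff_fst.contDiffOn.prodMk (contDiffOn_G hΩ hC hH)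

lemma fderiv_g_eq (hΩ : IsOpen Ω) (hC : ∀ i, ContDiffOn ℝ (⊤ : ℕ∞) (C i) Ω)
    (hH : ContDiffOn ℝ (⊤ : ℕ∞) H Ω) (lam : Fin (n-2) → ℝ) {x : Fin n → ℝ} (hx : x ∈ Ω)
    (v : Fin n → ℝ) :
    fderiv ℝ (fun x => grad H x + ∑ k, lam k • grad (C k) x) x v
      = (hess H x + ∑ k, lam k • hess (C k) x)ᵀ *ᵥ v := by
  have hgj : ∀ j : Fin n, DifferentiableAt ℝ
      (fun y => fderiv ℝ H y (Pi.single j 1) + ∑ k, lam k * fderiv ℝ (C k) y (Pi.single j 1)) x := by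
    intro j
    apply DifferentiableAt.add
    · exact ((contDiffOn_fderiv_apply hΩ hH _).contDiffAt (hΩ.mem_nhds hx)).differentiableAt (by simp)
    · exact DifferentiableAt.fun_sum fun k _ => (((contDiffOn_fderiv_apply hΩ (hC k) _).contDiffAt
        (hΩ.mem_nhds hx)).differentiableAt (by simp)).const_mul (lam k)
  have hg : (fun x => grad H x + ∑ k, lam k • grad (C k) x)
      = fun x => fun j => fderiv ℝ H x (Pi.single j 1)
        + ∑ k, lam k * fderiv ℝ (C k) x (Pi.single j 1) := by
    funext x j
    simp [grad, Finset.sum_apply]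
  rw [hg, fderiv_pi hgj]
  funext j
  rw [ContinuousLinearMap.pi_apply, clm_eval_eq_sum]
  have hterm : ∀ i : Fin n,
      fderiv ℝ (fun y => fderiv ℝ H y (Pi.single j 1)
        + ∑ k, lam k * fderiv ℝ (C k) y (Pi.single j 1)) x (Pi.single i 1)
      = (hess H x + ∑ k, lam k • hess (C k) x) i j := by
    intro i
    rw [fderiv_lincomb lam
      (((contDiffOn_fderiv_apply hΩ hH _).contDiffAt (hΩ.mem_nhds hx)).differentiableAt (by simp))
      (fun k => ((contDiffOn_fderiv_apply hΩ (hC k) _).contDiffAt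
        (hΩ.mem_nhds hx)).differentiableAt (by simp))]
    simp [hess, Matrix.sum_apply, Finset.sum_apply]
  simp only [hterm]
  simp [Matrix.mulVec, dotProduct, Matrix.transpose_apply, mul_comm]

lemma phi_hasFDerivAt (hΩ : IsOpen Ω) (hC : ∀ i, ContDiffOn ℝ (⊤ : ℕ∞) (C i) Ω)
    (hH : ContDiffOn ℝ (⊤ : ℕ∞) H Ω) {q : (Fin (n-2) → ℝ) × (Fin n → ℝ)} (hq : q.2 ∈ Ω)
    (hdet : (hess H q.2 + ∑ k, q.1 k • hess (C k) q.2).det ≠ 0) :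
    ∃ e : ((Fin (n-2) → ℝ) × (Fin n → ℝ)) ≃L[ℝ] ((Fin (n-2) → ℝ) × (Fin n → ℝ)),
      HasFDerivAt (PhiMap C H) (e : ((Fin (n-2) → ℝ) × (Fin n → ℝ)) →L[ℝ]
        ((Fin (n-2) → ℝ) × (Fin n → ℝ))) q := by
  classical
  set G : ((Fin (n-2) → ℝ) × (Fin n → ℝ)) → (Fin n → ℝ) :=
    fun p => grad H p.2 + ∑ k, p.1 k • grad (C k) p.2 with hGdef
  have hs : IsOpen ((Set.univ : Set (Fin (n-2) → ℝ)) ×ˢ Ω) := isOpen_univ.prod hΩ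
  have hqmem : q ∈ (Set.univ : Set (Fin (n-2) → ℝ)) ×ˢ Ω := ⟨trivial, hq⟩
  have hGdiff : DifferentiableAt ℝ G q :=
    ((contDiffOn_G hΩ hC hH).contDiffAt (hs.mem_nhds hqmem)).differentiableAt (by simp)
  have hΦhas : HasFDerivAt (PhiMap C H)
      ((ContinuousLinearMap.fst ℝ (Fin (n-2) → ℝ) (Fin n → ℝ)).prod (fderiv ℝ G q)) q :=
    HasFDerivAt.prodMk hasFDerivAt_fst hGdiff.hasFDerivAt
  set L := (ContinuousLinearMap.fst ℝ (Fin (n-2) → ℝ) (Fin n → ℝ)).prod (fderiv ℝ G q) with hLdef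
  -- the partial derivative in the x-direction
  have hpart : ∀ v, fderiv ℝ G q (0, v) = (hess H q.2 + ∑ k, q.1 k • hess (C k) q.2)ᵀ *ᵥ v := by
    intro v
    have hι : HasFDerivAt (fun x : Fin n → ℝ => (q.1, x))
        (ContinuousLinearMap.inr ℝ (Fin (n-2) → ℝ) (Fin n → ℝ)) q.2 :=
      hasFDerivAt_prodMk_right q.1 q.2
    have hcomp : HasFDerivAt (fun x => grad H x + ∑ k, q.1 k • grad (C k) x)
        ((fderiv ℝ G q).comp (ContinuousLinearMap.inr ℝ (Fin (n-2) → ℝ) (Fin n → ℝ))) q.2 :=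
      HasFDerivAt.comp q.2 (g := G) hGdiff.hasFDerivAt hι
    have := hcomp.fderiv
    rw [← fderiv_g_eq hΩ hC hH q.1 hq v, this]
    rfl
  -- injectivity of L
  have hker : ∀ p, L p = 0 → p = 0 := by
    intro p hp
    have h1 : p.1 = 0 := congrArg Prod.fst hp
    have h2 : fderiv ℝ G q p = 0 := congrArg Prod.snd hp
    have hp2 : p = (0, p.2) := by rw [← h1]
    rw [hp2] at h2
    have h2' : fderiv ℝ G q (0, p.2) = 0 := h2
    rw [hpart] at h2'
    have hp20 : p.2 = 0 := by
      by_contra hne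
      have := Matrix.exists_mulVec_eq_zero_iff.1 ⟨p.2, hne, h2'⟩
      rw [Matrix.det_transpose] at this
      exact hdet this
    rw [hp2, hp20]
    rfl
  have hinj : Function.Injective L.toLinearMap :=
    LinearMap.ker_eq_bot.1 (LinearMap.ker_eq_bot'.2 hker)
  have hsurj : Function.Surjective L.toLinearMap :=
    LinearMap.injective_iff_surjective.1 hinj
  let e₁ := LinearEquiv.ofBijective L.toLinearMap ⟨hinj, hsurj⟩
  let e := e₁.toContinuousLinearEquiv
  refine ⟨e, ?_⟩
  have : (e : ((Fin (n-2) → ℝ) × (Fin n → ℝ)) →L[ℝ] ((Fin (n-2) → ℝ) × (Fin n → ℝ))) = L :=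
    ContinuousLinearMap.ext fun p => rfl
  rw [this]
  exact hΦhas

lemma continuousOn_D {ν : (Fin n → ℝ) → ℝ} (hΩ : IsOpen Ω) (hν : ContDiffOn ℝ (⊤ : ℕ∞) ν Ω)
    (hC : ∀ i, ContDiffOn ℝ (⊤ : ℕ∞) (C i) Ω) (hH : ContDiffOn ℝ (⊤ : ℕ∞) H Ω) :
    ContinuousOn (fun p : (Fin (n-2) → ℝ) × (Fin n → ℝ) =>
      ν p.2 * (Matrix.of fun i j : Fin (n-2) => grad (C i) p.2 ⬝ᵥ grad (C j) p.2).det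
        * (hess H p.2 + ∑ k, p.1 k • hess (C k) p.2).det)
      (Set.univ ×ˢ Ω) := by
  have hmap : Set.MapsTo (Prod.snd) (Set.univ ×ˢ Ω : Set ((Fin (n-2) → ℝ) × (Fin n → ℝ))) Ω :=
    fun p hp => hp.2
  have hgradc : ∀ (f : (Fin n → ℝ) → ℝ), ContDiffOn ℝ (⊤ : ℕ∞) f Ω → ∀ i : Fin n,
      ContinuousOn (fun p : (Fin (n-2) → ℝ) × (Fin n → ℝ) => grad f p.2 i) (Set.univ ×ˢ Ω) :=
    fun f hf i => ((contDiffOn_fderiv_apply hΩ hf (Pi.single i 1)).continuousOn).comp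
      continuous_snd.continuousOn hmap
  have hhessc : ∀ (f : (Fin n → ℝ) → ℝ), ContDiffOn ℝ (⊤ : ℕ∞) f Ω → ∀ i j : Fin n,
      ContinuousOn (fun p : (Fin (n-2) → ℝ) × (Fin n → ℝ) => hess f p.2 i j)
        (Set.univ ×ˢ Ω) := by
    intro f hf i j
    exact ((contDiffOn_fderiv_apply hΩ
      (contDiffOn_fderiv_apply hΩ hf (Pi.single j 1)) (Pi.single i 1)).continuousOn).comp
      continuous_snd.continuousOn hmap
  apply ContinuousOn.mul
  apply ContinuousOn.mul
  · exact hν.continuousOn.comp continuous_snd.continuousOn hmap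
  · apply (continuous_id.matrix_det).comp_continuousOn
    apply continuousOn_pi.2; intro i
    apply continuousOn_pi.2; intro j
    simp only [Matrix.of_apply, dotProduct]
    exact continuousOn_finset_sum _ fun l _ => (hgradc _ (hC i) l).mul (hgradc _ (hC j) l)
  · apply (continuous_id.matrix_det).comp_continuousOn
    apply continuousOn_pi.2; intro i
    apply continuousOn_pi.2; intro j
    have : (fun p : (Fin (n-2) → ℝ) × (Fin n → ℝ) =>
        (hess H p.2 + ∑ k, p.1 k • hess (C k) p.2) i j)
        = fun p => hess H p.2 i j + ∑ k, p.1 k * hess (C k) p.2 i j := by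
      funext p; simp [Matrix.sum_apply]
    rw [this]
    exact (hhessc _ hH i j).add (continuousOn_finset_sum _ fun k _ =>
      ((((ContinuousLinearMap.proj k).comp
        (ContinuousLinearMap.fst ℝ (Fin (n-2) → ℝ) (Fin n → ℝ))).continuous).continuousOn).mul
        (hhessc _ (hC k) i j))

lemma gram_det_ne_zero_iff {k m : ℕ} (v : Fin k → (Fin m → ℝ)) :
    Matrix.det (Matrix.of fun i j : Fin k => v i ⬝ᵥ v j) ≠ 0 ↔ LinearIndependent ℝ v := by
  set A : Matrix (Fin k) (Fin m) ℝ := Matrix.of (fun i l => v i l) with hA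
  have hG : (Matrix.of fun i j : Fin k => v i ⬝ᵥ v j) = A * Aᵀ := by
    ext i j; simp [Matrix.mul_apply, dotProduct, hA]
  have hsum : ∀ a : Fin k → ℝ, Aᵀ *ᵥ a = ∑ i, a i • v i := by
    intro a; funext l
    simp [Matrix.mulVec, dotProduct, Finset.sum_apply, hA, mul_comm]
  rw [hG]
  constructor
  · intro hdet
    rw [Fintype.linearIndependent_iff]
    intro a ha
    by_contra hne
    have hane : a ≠ 0 := by
      intro h0; exact hne (fun i => by rw [h0]; rfl)
    have hz : (A * Aᵀ) *ᵥ a = 0 := by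
      rw [← Matrix.mulVec_mulVec, hsum, ha, Matrix.mulVec_zero]
    exact hdet (Matrix.exists_mulVec_eq_zero_iff.1 ⟨a, hane, hz⟩)
  · intro hli
    intro hdet
    obtain ⟨a, hane, ha0⟩ := (Matrix.exists_mulVec_eq_zero_iff).2 hdet
    have h1 : a ⬝ᵥ ((A * Aᵀ) *ᵥ a) = (Aᵀ *ᵥ a) ⬝ᵥ (Aᵀ *ᵥ a) := by
      rw [← Matrix.mulVec_mulVec, Matrix.dotProduct_mulVec, ← Matrix.mulVec_transpose]
    rw [ha0] at h1
    have h2 : Aᵀ *ᵥ a = 0 := by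
      have hz : ∀ l, (Aᵀ *ᵥ a) l * (Aᵀ *ᵥ a) l = 0 := by
        intro l
        have := (Finset.sum_eq_zero_iff_of_nonneg (fun i _ => mul_self_nonneg ((Aᵀ *ᵥ a) i))).1
          (by simpa [dotProduct] using h1.symm) l (Finset.mem_univ l)
        exact this
      funext l; exact mul_self_eq_zero.1 (hz l)
    rw [hsum] at h2
    have := Fintype.linearIndependent_iff.1 hli a h2
    exact hane (funext this)

end Helpers

/-- Around a non-degenerate regular equilibrium with multiplier `λ_e` there is
a smooth family `x̄(λ)` of non-degenerate regular equilibria with multiplier `λ`. -/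
theorem smooth_family_of_equilibria {n : ℕ} (hn : 3 ≤ n)
    (Ω : Set (Fin n → ℝ)) (hΩ : IsOpen Ω)
    (ν : (Fin n → ℝ) → ℝ) (C : Fin (n - 2) → (Fin n → ℝ) → ℝ) (H : (Fin n → ℝ) → ℝ)
    (hν : ContDiffOn ℝ (⊤ : ℕ∞) ν Ω) (hC : ∀ i, ContDiffOn ℝ (⊤ : ℕ∞) (C i) Ω)
    (hH : ContDiffOn ℝ (⊤ : ℕ∞) H Ω)
    (x_e : Fin n → ℝ) (hxe : x_e ∈ Ω) (lam_e : Fin (n - 2) → ℝ)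
    (hnd : IsNDRegEquilibrium ν C H x_e lam_e) :
    ∃ V : Set (Fin (n - 2) → ℝ), ∃ U : Set (Fin n → ℝ),
      ∃ xbar : (Fin (n - 2) → ℝ) → (Fin n → ℝ),
        IsOpen V ∧ lam_e ∈ V ∧ IsOpen U ∧ U ⊆ Ω ∧ x_e ∈ U ∧
        ContDiffOn ℝ (⊤ : ℕ∞) xbar V ∧ xbar lam_e = x_e ∧
        ∀ lam ∈ V, xbar lam ∈ U ∧ IsNDRegEquilibrium ν C H (xbar lam) lam := by
  classical
  obtain ⟨hν0, hli, heqb, hhess⟩ := hnd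
  have hs : IsOpen ((Set.univ : Set (Fin (n-2) → ℝ)) ×ˢ Ω) := isOpen_univ.prod hΩ
  set p₀ : (Fin (n-2) → ℝ) × (Fin n → ℝ) := (lam_e, x_e) with hp₀
  have hp₀mem : p₀ ∈ Set.univ ×ˢ Ω := ⟨trivial, hxe⟩
  have hΦcd := contDiffOn_PhiMap hΩ hC hH
  have hΦat : ContDiffAt ℝ (⊤ : ℕ∞) (PhiMap C H) p₀ := hΦcd.contDiffAt (hs.mem_nhds hp₀mem)
  have hdet0 : (hess H x_e + ∑ k, lam_e k • hess (C k) x_e).det ≠ 0 := by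
    rw [← hess_Flam hΩ hC hH lam_e hxe]; exact hhess
  obtain ⟨e₀, he₀⟩ := phi_hasFDerivAt hΩ hC hH (q := p₀) hxe hdet0
  have hstrict : HasStrictFDerivAt (PhiMap C H)
      (e₀ : ((Fin (n-2) → ℝ) × (Fin n → ℝ)) →L[ℝ] ((Fin (n-2) → ℝ) × (Fin n → ℝ))) p₀ :=
    hΦat.hasStrictFDerivAt' he₀ (by simp)
  set Pf := hstrict.toOpenPartialHomeomorph (PhiMap C H) with hPfdef
  set Ψ : ((Fin (n-2) → ℝ) × (Fin n → ℝ)) → ((Fin (n-2) → ℝ) × (Fin n → ℝ)) :=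
    hstrict.localInverse (PhiMap C H) _ _ with hΨdef
  have hΨsymm : Ψ = Pf.symm := hstrict.localInverse_def
  have hΦp₀ : PhiMap C H p₀ = (lam_e, (0 : Fin n → ℝ)) := by
    show (p₀.1, grad H p₀.2 + ∑ k, p₀.1 k • grad (C k) p₀.2) = _
    rw [hp₀]
    exact Prod.ext rfl heqb
  have hΨp₀ : Ψ (lam_e, 0) = p₀ := by
    rw [← hΦp₀]; exact hstrict.localInverse_apply_image
  have hΨcont : ContinuousAt Ψ (lam_e, 0) := by
    rw [← hΦp₀]; exact hstrict.localInverse_continuousAt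
  set D : (Fin (n-2) → ℝ) × (Fin n → ℝ) → ℝ := fun p =>
    ν p.2 * (Matrix.of fun i j : Fin (n-2) => grad (C i) p.2 ⬝ᵥ grad (C j) p.2).det
      * (hess H p.2 + ∑ k, p.1 k • hess (C k) p.2).det with hDdef
  have hDcont : ContinuousOn D (Set.univ ×ˢ Ω) := continuousOn_D hΩ hν hC hH
  set S := ((Set.univ : Set (Fin (n-2) → ℝ)) ×ˢ Ω) ∩ D ⁻¹' {(0:ℝ)}ᶜ with hSdef
  have hSopen : IsOpen S := hDcont.isOpen_inter_preimage hs isOpen_compl_singleton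
  have hgram0 : (Matrix.of fun i j : Fin (n-2) => grad (C i) x_e ⬝ᵥ grad (C j) x_e).det ≠ 0 :=
    (gram_det_ne_zero_iff _).2 hli
  have hp₀S : p₀ ∈ S := by
    refine ⟨hp₀mem, ?_⟩
    simp only [Set.mem_preimage, Set.mem_compl_iff, Set.mem_singleton_iff, hDdef]
    exact mul_ne_zero (mul_ne_zero hν0 hgram0) hdet0
  set τ : (Fin (n-2) → ℝ) → (Fin (n-2) → ℝ) × (Fin n → ℝ) := fun l => (l, 0) with hτdef
  have hτcont : Continuous τ := continuous_id.prodMk continuous_const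
  have htend : Filter.Tendsto τ (nhds lam_e) (nhds (PhiMap C H p₀)) := by
    rw [hΦp₀]; exact hτcont.continuousAt
  have E1 : ∀ᶠ l in nhds lam_e, PhiMap C H (Ψ (τ l)) = τ l :=
    htend.eventually hstrict.eventually_right_inverse
  have hΨτ : ContinuousAt (Ψ ∘ τ) lam_e :=
    ContinuousAt.comp (show ContinuousAt Ψ (τ lam_e) from hΨcont) hτcont.continuousAt
  have E2 : ∀ᶠ l in nhds lam_e, Ψ (τ l) ∈ S := by
    have hmem : Ψ (τ lam_e) ∈ S := by
      show Ψ (lam_e, 0) ∈ S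
      rw [hΨp₀]; exact hp₀S
    exact hΨτ.eventually_mem (hSopen.mem_nhds hmem)
  have htarget : PhiMap C H p₀ ∈ Pf.target :=
    hstrict.image_mem_toOpenPartialHomeomorph_target
  have E3 : ∀ᶠ l in nhds lam_e, τ l ∈ Pf.target :=
    htend.eventually (Pf.open_target.eventually_mem htarget)
  obtain ⟨V, hVsub, hVopen, hlamV⟩ := eventually_nhds_iff.1 ((E1.and E2).and E3)
  refine ⟨V, Ω, fun l => (Ψ (τ l)).2, hVopen, hlamV, hΩ, subset_rfl, hxe, ?_, ?_, ?_⟩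
  · -- smoothness
    intro l hl
    obtain ⟨⟨h1, h2⟩, h3⟩ := hVsub l hl
    have hqΩ : (Ψ (τ l)).2 ∈ Ω := h2.1.2
    have hDq : D (Ψ (τ l)) ≠ 0 := h2.2
    rw [hDdef, mul_ne_zero_iff] at hDq
    obtain ⟨eq', heq'⟩ := phi_hasFDerivAt hΩ hC hH hqΩ hDq.2
    have hΦatq : ContDiffAt ℝ (⊤ : ℕ∞) (PhiMap C H) (Ψ (τ l)) :=
      hΦcd.contDiffAt (hs.mem_nhds ⟨trivial, hqΩ⟩)
    have hq_symm : Pf.symm (τ l) = Ψ (τ l) := by rw [← hΨsymm]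
    have hsymmat : ContDiffAt ℝ (⊤ : ℕ∞) (Pf.symm) (τ l) := by
      apply Pf.contDiffAt_symm h3
      · rw [hq_symm]; exact heq'
      · rw [hq_symm]; exact hΦatq
    have hτcd : ContDiffAt ℝ (⊤ : ℕ∞) τ l := (contDiff_id.prodMk contDiff_const).contDiffAt
    have : ContDiffAt ℝ (⊤ : ℕ∞) (fun l => (Ψ (τ l)).2) l := by
      rw [hΨsymm]
      exact contDiff_snd.contDiffAt.comp l ((hsymmat.comp l hτcd))
    exact this.contDiffWithinAt
  · -- value at lam_e
    show (Ψ (lam_e, 0)).2 = x_e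
    rw [hΨp₀]
  · -- equilibrium conditions
    intro lam hlam
    obtain ⟨⟨h1, h2⟩, h3⟩ := hVsub lam hlam
    have hqΩ : (Ψ (τ lam)).2 ∈ Ω := h2.1.2
    have hDq : D (Ψ (τ lam)) ≠ 0 := h2.2
    rw [hDdef, mul_ne_zero_iff, mul_ne_zero_iff] at hDq
    obtain ⟨⟨hν2, hgram2⟩, hdet2⟩ := hDq
    have hq1 : (Ψ (τ lam)).1 = lam := congrArg Prod.fst h1
    have hGzero : grad H (Ψ (τ lam)).2 + ∑ k, (Ψ (τ lam)).1 k • grad (C k) (Ψ (τ lam)).2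
        = 0 := congrArg Prod.snd h1
    rw [hq1] at hGzero hdet2
    refine ⟨hqΩ, hν2, (gram_det_ne_zero_iff _).1 hgram2, hGzero, ?_⟩
    rw [hess_Flam hΩ hC hH lam hqΩ]
    exact hdet2
end

section
/- Let x_e ∈ Ω be a non-degenerate regular equilibrium of X with multiplier λ = (λ₁,…,λ_{n−2}), let Ω′ ⊆ Ω be an open neighborhood of x_e, and let Φ : Ω′ → W′ := Φ(Ω′) ⊆ ℝⁿ be a C^∞ diffeomorphism. Define ν_Φ : W′ → ℝ by ν_Φ(y) = ν(Φ⁻¹(y)) · det DΦ(Φ⁻¹(y)), and set G := F_λ ∘ Φ⁻¹ and D_i := C_i ∘ Φ⁻¹ for i = 1,…,n−2. Then the scalar quantity computed from the transformed data equals the original one: ν_Φ(Φ(x_e))² · det(Hess G(Φ(x_e))) · det([⟨(Hess G(Φ(x_e)))⁻¹ ∇D_i(Φ(x_e)), ∇D_j(Φ(x_e))⟩]_{1≤i,j≤n−2}) = ν(x_e)² · det(Hess F_λ(x_e)) · det([⟨(Hess F_λ(x_e))⁻¹ ∇C_i(x_e), ∇C_j(x_e)⟩]_{1≤i,j≤n−2}).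 (Invariance of I_X(x_e) under smooth diffeomorphisms.) -/
open Matrix

section AuxLemmas

lemma clm_apply_pi {n : ℕ} {F : Type*} [NormedAddCommGroup F] [NormedSpace ℝ F]
    (L : (Fin n → ℝ) →L[ℝ] F) (v : Fin n → ℝ) :
    L v = ∑ k, v k • L (Pi.single k 1) := by
  have hv : v = ∑ k, v k • (Pi.single k 1 : Fin n → ℝ) := by
    conv_lhs => rw [← Finset.univ_sum_single v]
    refine Finset.sum_congr rfl fun k _ => ?_
    ext m
    simp [Pi.single_apply]
  conv_lhs => rw [hv]
  rw [map_sum]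
  exact Finset.sum_congr rfl fun k _ => L.map_smul _ _

lemma fderiv_pi_comp {n : ℕ} (Ψ : (Fin n → ℝ) → (Fin n → ℝ)) {y : Fin n → ℝ}
    (hΨ : DifferentiableAt ℝ Ψ y) (k : Fin n) (w : Fin n → ℝ) :
    fderiv ℝ (fun z => Ψ z k) y w = (fderiv ℝ Ψ y w) k := by
  have h : HasFDerivAt (fun z => Ψ z k)
      ((ContinuousLinearMap.proj k).comp (fderiv ℝ Ψ y)) y := by
    exact ((ContinuousLinearMap.proj k).hasFDerivAt.comp y hΨ.hasFDerivAt :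
      HasFDerivAt ((ContinuousLinearMap.proj (R := ℝ) (φ := fun _ : Fin n => ℝ) k) ∘ Ψ) _ y)
  rw [h.fderiv]
  rfl

lemma grad_comp {n : ℕ} (f : (Fin n → ℝ) → ℝ) (Ψ : (Fin n → ℝ) → (Fin n → ℝ)) {y : Fin n → ℝ}
    (hf : DifferentiableAt ℝ f (Ψ y)) (hΨ : DifferentiableAt ℝ Ψ y) (j : Fin n) :
    grad (f ∘ Ψ) y j = ∑ k, jac Ψ y k j * grad f (Ψ y) k := by
  unfold grad jac
  rw [fderiv_comp y hf hΨ, ContinuousLinearMap.comp_apply,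
    clm_apply_pi (fderiv ℝ f (Ψ y)) (fderiv ℝ Ψ y (Pi.single j 1))]
  refine Finset.sum_congr rfl fun k _ => ?_
  rw [smul_eq_mul, Matrix.of_apply, fderiv_pi_comp Ψ hΨ k]

lemma grad_congr {n : ℕ} {f g : (Fin n → ℝ) → ℝ} {x : Fin n → ℝ}
    (h : f =ᶠ[nhds x] g) : grad f x = grad g x :=
  funext fun l => by unfold grad; rw [Filter.EventuallyEq.fderiv_eq h]

end AuxLemmas

/-- Invariance of the scalar quantity `I_X(x_e)` under smooth
diffeomorphisms: the quantity computed from the transformed data `ν_Φ`, `G = F_λ ∘ Φ⁻¹`,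
`D_i = C_i ∘ Φ⁻¹` at `Φ(x_e)` equals the original one at `x_e`. -/
theorem scalar_invariance_under_diffeomorphism {n : ℕ} (hn : 3 ≤ n)
    (Ω : Set (Fin n → ℝ)) (hΩ : IsOpen Ω)
    (ν : (Fin n → ℝ) → ℝ) (C : Fin (n - 2) → (Fin n → ℝ) → ℝ) (H : (Fin n → ℝ) → ℝ)
    (hν : ContDiffOn ℝ (⊤ : ℕ∞) ν Ω) (hC : ∀ i, ContDiffOn ℝ (⊤ : ℕ∞) (C i) Ω)
    (hH : ContDiffOn ℝ (⊤ : ℕ∞) H Ω)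
    (x_e : Fin n → ℝ) (lam : Fin (n - 2) → ℝ)
    (hnd : IsNDRegEquilibrium ν C H x_e lam)
    (Ω' W' : Set (Fin n → ℝ)) (hΩ' : IsOpen Ω') (hΩ'Ω : Ω' ⊆ Ω) (hxe : x_e ∈ Ω')
    (hW' : IsOpen W')
    (Φ Ψ : (Fin n → ℝ) → (Fin n → ℝ))
    (hΦ : ContDiffOn ℝ (⊤ : ℕ∞) Φ Ω') (hΨ : ContDiffOn ℝ (⊤ : ℕ∞) Ψ W')
    (hΦW : Φ '' Ω' = W')
    (hΨΦ : ∀ x ∈ Ω', Ψ (Φ x) = x) (hΦΨ : ∀ y ∈ W', Φ (Ψ y) = y)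
    (νΦ : (Fin n → ℝ) → ℝ) (hνΦ : ∀ y, νΦ y = ν (Ψ y) * (jac Φ (Ψ y)).det)
    (G : (Fin n → ℝ) → ℝ) (hG : G = (Flam C H lam) ∘ Ψ)
    (D : Fin (n - 2) → (Fin n → ℝ) → ℝ) (hD : ∀ i, D i = (C i) ∘ Ψ) :
    (νΦ (Φ x_e)) ^ 2 * (hess G (Φ x_e)).det *
      Matrix.det (Matrix.of fun i j : Fin (n - 2) =>
        ((hess G (Φ x_e))⁻¹ *ᵥ grad (D i) (Φ x_e)) ⬝ᵥ grad (D j) (Φ x_e))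
    = scalarI ν C H x_e lam := by
  
  obtain ⟨hν0, hlin, hgrad0, hdet0⟩ := hnd
  have hxΩ : x_e ∈ Ω := hΩ'Ω hxe
  set F := Flam C H lam with hF
  set y0 := Φ x_e with hy0
  have hy0W : y0 ∈ W' := hΦW ▸ Set.mem_image_of_mem Φ hxe
  have hΨy0 : Ψ y0 = x_e := hΨΦ x_e hxe
  have hFΩ : ContDiffOn ℝ (⊤ : ℕ∞) F Ω :=
    hH.add (ContDiffOn.sum fun i _ => contDiffOn_const.mul (hC i))
  have hFc : ContDiffAt ℝ (⊤ : ℕ∞) F x_e := hFΩ.contDiffAt (hΩ.mem_nhds hxΩ)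
  have hΨc : ContDiffAt ℝ (⊤ : ℕ∞) Ψ y0 := hΨ.contDiffAt (hW'.mem_nhds hy0W)
  have hΨd : DifferentiableAt ℝ Ψ y0 := hΨc.differentiableAt (by simp)
  have hΦd : DifferentiableAt ℝ Φ x_e :=
    (hΦ.contDiffAt (hΩ'.mem_nhds hxe)).differentiableAt (by simp)
  have hΨdW : ∀ y ∈ W', DifferentiableAt ℝ Ψ y := fun y hy =>
    (hΨ.contDiffAt (hW'.mem_nhds hy)).differentiableAt (by simp)
  have hΨW : ∀ y ∈ W', Ψ y ∈ Ω' := by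
    intro y hy
    rw [← hΦW] at hy
    obtain ⟨x, hx, rfl⟩ := hy
    rw [hΨΦ x hx]; exact hx
  have hFdΩ : ∀ x ∈ Ω, DifferentiableAt ℝ F x := fun x hx =>
    (hFΩ.contDiffAt (hΩ.mem_nhds hx)).differentiableAt (by simp)
  -- the gradient of F vanishes at x_e
  have hgF0 : grad F x_e = 0 := by
    have hH' : DifferentiableAt ℝ H x_e :=
      (hH.contDiffAt (hΩ.mem_nhds hxΩ)).differentiableAt (by simp)
    have hC' : ∀ i, DifferentiableAt ℝ (C i) x_e := fun i =>
      ((hC i).contDiffAt (hΩ.mem_nhds hxΩ)).differentiableAt (by simp)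
    have h1 : HasFDerivAt F (fderiv ℝ H x_e + ∑ i, lam i • fderiv ℝ (C i) x_e) x_e :=
      hH'.hasFDerivAt.add (HasFDerivAt.fun_sum fun i _ => ((hC' i).hasFDerivAt.const_mul (lam i)))
    funext k
    have h2 : grad F x_e k = grad H x_e k + ∑ i, lam i * grad (C i) x_e k := by
      show fderiv ℝ F x_e (Pi.single k 1) = _
      rw [h1.fderiv]
      simp [grad]
    have h3 := congrFun hgrad0 k
    simp only [Pi.add_apply, Finset.sum_apply, Pi.smul_apply, smul_eq_mul,
      Pi.zero_apply] at h3
    rw [Pi.zero_apply, h2, h3]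
  -- the family of first partial derivatives of F
  set gF : Fin n → (Fin n → ℝ) → ℝ := fun k z => fderiv ℝ F z (Pi.single k 1) with hgFdef
  have hfdc : ContDiffAt ℝ (⊤ : ℕ∞) (fderiv ℝ F) x_e := hFc.fderiv_right (by simp)
  have hgFc : ∀ k, DifferentiableAt ℝ (gF k) x_e := by
    intro k
    have h0 : ContDiffAt ℝ (⊤ : ℕ∞)
        (⇑(ContinuousLinearMap.apply ℝ ℝ (Pi.single k 1)) ∘ (fderiv ℝ F)) x_e :=
      (ContinuousLinearMap.apply ℝ ℝ (Pi.single k 1)).contDiff.contDiffAt.comp x_e hfdc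
    have h : ContDiffAt ℝ (⊤ : ℕ∞) (fun z => fderiv ℝ F z (Pi.single k 1)) x_e := h0
    exact h.differentiableAt (by simp)
  have hgF0' : ∀ k, gF k (Ψ y0) = 0 := fun k => by
    rw [hΨy0]
    exact congrFun hgF0 k
  -- transformation rule for the Hessian at the critical point
  have hhess : hess G y0 = (jac Ψ y0)ᵀ * hess F x_e * (jac Ψ y0) := by
    ext i j
    have hstep1 : ∀ y ∈ W', fderiv ℝ G y (Pi.single j 1) = ∑ k, jac Ψ y k j * gF k (Ψ y) := by
      intro y hy
      have h := grad_comp F Ψ (hFdΩ _ (hΩ'Ω (hΨW y hy))) (hΨdW y hy) j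
      rw [hG]
      exact h
    have heq : (fun y => fderiv ℝ G y (Pi.single j 1)) =ᶠ[nhds y0]
        (fun y => ∑ k, jac Ψ y k j * gF k (Ψ y)) :=
      Filter.eventuallyEq_of_mem (hW'.mem_nhds hy0W) hstep1
    have hhij : hess G y0 i j
        = fderiv ℝ (fun y => ∑ k, jac Ψ y k j * gF k (Ψ y)) y0 (Pi.single i 1) := by
      show fderiv ℝ (fun y => fderiv ℝ G y (Pi.single j 1)) y0 (Pi.single i 1) = _
      rw [heq.fderiv_eq]
    have hud : ∀ k, DifferentiableAt ℝ (fun y => jac Ψ y k j) y0 := by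
      intro k
      have h1 : ContDiffAt ℝ (⊤ : ℕ∞) (fun z => Ψ z k) y0 :=
        (ContinuousLinearMap.proj (R := ℝ) (φ := fun _ : Fin n => ℝ) k).contDiff.contDiffAt.comp
          y0 hΨc
      have h2 : ContDiffAt ℝ (⊤ : ℕ∞) (fderiv ℝ (fun z => Ψ z k)) y0 := h1.fderiv_right (by simp)
      have h30 : ContDiffAt ℝ (⊤ : ℕ∞)
          (⇑(ContinuousLinearMap.apply ℝ ℝ (Pi.single j 1)) ∘ (fderiv ℝ (fun z => Ψ z k))) y0 :=
        (ContinuousLinearMap.apply ℝ ℝ (Pi.single j 1)).contDiff.contDiffAt.comp y0 h2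
      have h3 : ContDiffAt ℝ (⊤ : ℕ∞) (fun y => fderiv ℝ (fun z => Ψ z k) y (Pi.single j 1)) y0 := h30
      exact h3.differentiableAt (by simp)
    have hVd : ∀ k, HasFDerivAt (fun y => gF k (Ψ y))
        ((fderiv ℝ (gF k) x_e).comp (fderiv ℝ Ψ y0)) y0 := by
      intro k
      have h := hgFc k
      rw [← hΨy0] at h
      have h2 := h.hasFDerivAt.comp y0 hΨd.hasFDerivAt
      rw [hΨy0] at h2
      exact h2
    have hprod : HasFDerivAt (fun y => ∑ k, jac Ψ y k j * gF k (Ψ y))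
        (∑ k, ((jac Ψ y0 k j) • ((fderiv ℝ (gF k) x_e).comp (fderiv ℝ Ψ y0)) +
           (gF k (Ψ y0)) • fderiv ℝ (fun y => jac Ψ y k j) y0)) y0 :=
      HasFDerivAt.fun_sum fun k _ => ((hud k).hasFDerivAt.mul (hVd k))
    rw [hhij, hprod.fderiv]
    have hval : ∀ k, fderiv ℝ (gF k) x_e (fderiv ℝ Ψ y0 (Pi.single i 1)) =
        ∑ m, jac Ψ y0 m i * hess F x_e m k := by
      intro k
      rw [clm_apply_pi]
      refine Finset.sum_congr rfl fun m _ => ?_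
      rw [smul_eq_mul]
      congr 1
      rw [← fderiv_pi_comp Ψ hΨd m]
      rfl
    simp only [ContinuousLinearMap.sum_apply, ContinuousLinearMap.add_apply,
      ContinuousLinearMap.smul_apply, ContinuousLinearMap.coe_comp', Function.comp_apply,
      smul_eq_mul, hgF0', zero_mul, add_zero, hval]
    rw [Matrix.mul_apply]
    refine Finset.sum_congr rfl fun k _ => ?_
    rw [Matrix.mul_apply]
    simp only [Matrix.transpose_apply]
    rw [mul_comm, Finset.sum_mul]
  -- transformation rule for the gradients of the constraints
  have hgradD : ∀ i, grad (D i) y0 = (jac Ψ y0)ᵀ *ᵥ grad (C i) x_e := by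
    intro i
    have hCd : DifferentiableAt ℝ (C i) (Ψ y0) := by
      rw [hΨy0]
      exact ((hC i).contDiffAt (hΩ.mem_nhds hxΩ)).differentiableAt (by simp)
    funext l
    rw [hD i, grad_comp (C i) Ψ hCd hΨd l]
    simp [Matrix.mulVec, dotProduct, Matrix.transpose_apply, hΨy0, mul_comm]
  -- the Jacobians are mutually inverse
  have hBA : jac Ψ y0 * jac Φ x_e = 1 := by
    ext i l
    have hdΨi : DifferentiableAt ℝ (fun z => Ψ z i) y0 := by
      exact ((ContinuousLinearMap.proj (R := ℝ) (φ := fun _ : Fin n => ℝ) i).contDiff.contDiffAt.comp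
        y0 hΨc).differentiableAt (by simp)
    have h := grad_comp (fun z => Ψ z i) Φ (by rw [← hy0]; exact hdΨi) hΦd l
    have h2 : ((fun z => Ψ z i) ∘ Φ) =ᶠ[nhds x_e] (fun x => x i) :=
      Filter.eventuallyEq_of_mem (hΩ'.mem_nhds hxe)
        (fun x hx => by simp [Function.comp, hΨΦ x hx])
    have h3 : grad ((fun z => Ψ z i) ∘ Φ) x_e l = (1 : Matrix (Fin n) (Fin n) ℝ) i l := by
      rw [grad_congr h2]
      unfold grad
      have hfd : fderiv ℝ (fun x : Fin n → ℝ => x i) x_e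
          = ContinuousLinearMap.proj (R := ℝ) (φ := fun _ : Fin n => ℝ) i :=
        (ContinuousLinearMap.proj (R := ℝ) (φ := fun _ : Fin n => ℝ) i).fderiv
      rw [hfd]
      simp [Matrix.one_apply, Pi.single_apply, eq_comm]
    rw [Matrix.mul_apply, ← h3, h]
    exact Finset.sum_congr rfl fun k _ => by rw [mul_comm]; rfl
  have hAB : jac Φ x_e * jac Ψ y0 = 1 := by
    ext i l
    have hdΦi : DifferentiableAt ℝ (fun z => Φ z i) x_e := by
      exact ((ContinuousLinearMap.proj (R := ℝ) (φ := fun _ : Fin n => ℝ) i).contDiff.contDiffAt.comp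
        x_e (hΦ.contDiffAt (hΩ'.mem_nhds hxe))).differentiableAt (by simp)
    have h := grad_comp (fun z => Φ z i) Ψ (by rw [hΨy0]; exact hdΦi) hΨd l
    have h2 : ((fun z => Φ z i) ∘ Ψ) =ᶠ[nhds y0] (fun y => y i) :=
      Filter.eventuallyEq_of_mem (hW'.mem_nhds hy0W)
        (fun y hy => by simp [Function.comp, hΦΨ y hy])
    have h3 : grad ((fun z => Φ z i) ∘ Ψ) y0 l = (1 : Matrix (Fin n) (Fin n) ℝ) i l := by
      rw [grad_congr h2]
      unfold grad
      have hfd : fderiv ℝ (fun x : Fin n → ℝ => x i) y0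
          = ContinuousLinearMap.proj (R := ℝ) (φ := fun _ : Fin n => ℝ) i :=
        (ContinuousLinearMap.proj (R := ℝ) (φ := fun _ : Fin n => ℝ) i).fderiv
      rw [hfd]
      simp [Matrix.one_apply, Pi.single_apply, eq_comm]
    rw [Matrix.mul_apply, ← h3, h]
    refine Finset.sum_congr rfl fun k _ => ?_
    rw [hΨy0, mul_comm]
    rfl
  have hnuφ : νΦ y0 = ν x_e * (jac Φ x_e).det := by
    rw [hνΦ y0, hΨy0]
  have hdetAB : (jac Φ x_e).det * (jac Ψ y0).det = 1 := by
    rw [← Matrix.det_mul, hAB, Matrix.det_one]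
  -- inverse of the transformed Hessian
  have hinv : (hess G y0)⁻¹ = jac Φ x_e * ((hess F x_e)⁻¹ * (jac Φ x_e)ᵀ) := by
    rw [hhess, Matrix.mul_inv_rev, Matrix.mul_inv_rev, ← Matrix.transpose_nonsing_inv,
      Matrix.inv_eq_right_inv hBA]
  -- the (n-2)×(n-2) matrices of inner products coincide
  have hMentry : ∀ i j : Fin (n - 2), ((hess G y0)⁻¹ *ᵥ grad (D i) y0) ⬝ᵥ grad (D j) y0
      = ((hess F x_e)⁻¹ *ᵥ grad (C i) x_e) ⬝ᵥ grad (C j) x_e := by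
    intro i j
    rw [hinv, hgradD, hgradD, Matrix.mulVec_mulVec]
    have htr : (jac Φ x_e)ᵀ * (jac Ψ y0)ᵀ = 1 := by
      rw [← Matrix.transpose_mul, hBA, Matrix.transpose_one]
    have hm : (jac Φ x_e * ((hess F x_e)⁻¹ * (jac Φ x_e)ᵀ)) * (jac Ψ y0)ᵀ
        = jac Φ x_e * (hess F x_e)⁻¹ := by
      rw [Matrix.mul_assoc, Matrix.mul_assoc, htr, Matrix.mul_one]
    rw [hm, Matrix.dotProduct_mulVec, Matrix.vecMul_transpose, Matrix.mulVec_mulVec,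
      ← Matrix.mul_assoc, hBA, Matrix.one_mul]
  have hMeq : (Matrix.of fun i j : Fin (n - 2) =>
        ((hess G y0)⁻¹ *ᵥ grad (D i) y0) ⬝ᵥ grad (D j) y0)
      = (Matrix.of fun i j : Fin (n - 2) =>
        ((hess F x_e)⁻¹ *ᵥ grad (C i) x_e) ⬝ᵥ grad (C j) x_e) := by
    ext i j
    exact hMentry i j
  rw [hMeq, hnuφ, hhess]
  unfold scalarI
  rw [← hF, Matrix.det_mul, Matrix.det_mul, Matrix.det_transpose]
  have hgoal : (ν x_e * (jac Φ x_e).det) ^ 2 *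
      ((jac Ψ y0).det * (hess F x_e).det * (jac Ψ y0).det) *
      (Matrix.of fun i j : Fin (n - 2) =>
        ((hess F x_e)⁻¹ *ᵥ grad (C i) x_e) ⬝ᵥ grad (C j) x_e).det
      = ν x_e ^ 2 * (hess F x_e).det *
      (Matrix.of fun i j : Fin (n - 2) =>
        ((hess F x_e)⁻¹ *ᵥ grad (C i) x_e) ⬝ᵥ grad (C j) x_e).det := by
    have h2 : (ν x_e * (jac Φ x_e).det) ^ 2 *
        ((jac Ψ y0).det * (hess F x_e).det * (jac Ψ y0).det) *
        (Matrix.of fun i j : Fin (n - 2) =>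
          ((hess F x_e)⁻¹ *ᵥ grad (C i) x_e) ⬝ᵥ grad (C j) x_e).det
        = ν x_e ^ 2 * (hess F x_e).det *
        (Matrix.of fun i j : Fin (n - 2) =>
          ((hess F x_e)⁻¹ *ᵥ grad (C i) x_e) ⬝ᵥ grad (C j) x_e).det *
        ((jac Φ x_e).det * (jac Ψ y0).det) ^ 2 := by ring
    rw [h2, hdetAB, one_pow, mul_one]
  exact hgoal
end

section
/- For every (x, y, z) ∈ ℝ³, the Rikitake vector field satisfies X_β(x, y, z) = ∇I₂^β(x, y, z) × ∇I₁(x, y, z), where × denotes the cross product in ℝ³; explicitly, ∇I₂^β(x,y,z) = (−x/2, y/2, −β), ∇I₁(x,y,z) = (x, y, 2z), and their cross product equals (yz + βy, xz − βx, −xy). (Hamiltonian realization of the Rikitake system with rescaling function ν ≡ −1.) -/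
open Matrix

/-- The Rikitake vector field `X_β(x,y,z) = (yz + βy, xz − βx, −xy)`. -/
noncomputable def Riki (β : ℝ) (p : Fin 3 → ℝ) : Fin 3 → ℝ :=
  ![p 1 * p 2 + β * p 1, p 0 * p 2 - β * p 0, -(p 0 * p 1)]

/-- The first integral `I₁(x,y,z) = ½(x² + y²) + z²` of the Rikitake system. -/
noncomputable def rikiI1 (p : Fin 3 → ℝ) : ℝ :=
  (1 / 2) * ((p 0) ^ 2 + (p 1) ^ 2) + (p 2) ^ 2

/-- The first integral `I₂^β(x,y,z) = ¼(−x² + y²) − βz` of the Rikitake system. -/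
noncomputable def rikiI2 (β : ℝ) (p : Fin 3 → ℝ) : ℝ :=
  (1 / 4) * (-(p 0) ^ 2 + (p 1) ^ 2) - β * p 2

/-- Lyapunov stability of an equilibrium `p` of the vector field `X` on `ℝ³`. -/
def LyapunovStable3 (X : (Fin 3 → ℝ) → (Fin 3 → ℝ)) (p : Fin 3 → ℝ) : Prop :=
  ∀ U : Set (Fin 3 → ℝ), IsOpen U → p ∈ U →
    ∃ V : Set (Fin 3 → ℝ), V ⊆ U ∧ IsOpen V ∧ p ∈ V ∧
      ∀ f : ℝ → (Fin 3 → ℝ), f 0 ∈ V →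
        (∀ t : ℝ, 0 ≤ t → HasDerivWithinAt f (X (f t)) (Set.Ici 0) t) →
        ∀ t : ℝ, 0 ≤ t → f t ∈ U

/-! Both first integrals are diagonal quadratic polynomials `∑ᵢ (aᵢ qᵢ² + bᵢ qᵢ)`, whose gradient
is `(2 aᵢ qᵢ + bᵢ)ᵢ`; the realization is then a direct computation of one cross product. -/

theorem hasFDerivAt_sum_mul_sq_add_mul {n : ℕ} (a b x : Fin n → ℝ) :
    HasFDerivAt (fun q : Fin n → ℝ => ∑ i, (a i * q i ^ 2 + b i * q i))
      (∑ i, (2 * a i * x i + b i) • ContinuousLinearMap.proj (R := ℝ) (φ := fun _ : Fin n => ℝ) i)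
      x := by
  refine HasFDerivAt.fun_sum fun i _ => ?_
  have hi := hasFDerivAt_apply (𝕜 := ℝ) i x
  convert ((hi.pow 2).const_mul (a i)).fun_add (hi.const_mul (b i)) using 1
  simp only [nsmul_eq_mul, Nat.cast_ofNat, pow_one, Nat.add_one_sub_one, smul_smul, ← add_smul]
  ring_nf

theorem grad_sum_mul_sq_add_mul {n : ℕ} (a b x : Fin n → ℝ) :
    grad (fun q : Fin n → ℝ => ∑ i, (a i * q i ^ 2 + b i * q i)) x =
      fun i => 2 * a i * x i + b i := by
  funext i
  simp [grad, (hasFDerivAt_sum_mul_sq_add_mul a b x).fderiv, Pi.single_apply]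

theorem grad_rikiI1 (p : Fin 3 → ℝ) : grad rikiI1 p = ![p 0, p 1, 2 * p 2] := by
  have h : rikiI1 = fun q => ∑ i, (![1 / 2, 1 / 2, 1] i * q i ^ 2 + 0 * q i) := by
    funext q
    simp only [rikiI1, Fin.sum_univ_three, cons_val_zero, cons_val_one, cons_val_two,
      tail_cons, head_cons]
    ring
  rw [h, grad_sum_mul_sq_add_mul]
  funext i
  fin_cases i <;> simp

theorem grad_rikiI2 (β : ℝ) (p : Fin 3 → ℝ) :
    grad (rikiI2 β) p = ![-(p 0) / 2, p 1 / 2, -β] := by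
  have h : rikiI2 β = fun q => ∑ i, (![-1 / 4, 1 / 4, 0] i * q i ^ 2 + ![0, 0, -β] i * q i) := by
    funext q
    simp only [rikiI2, Fin.sum_univ_three, cons_val_zero, cons_val_one, cons_val_two,
      tail_cons, head_cons]
    ring
  rw [h, grad_sum_mul_sq_add_mul]
  funext i
  fin_cases i <;> simp <;> ring

theorem crossProduct_rikitake_gradients (β : ℝ) (p : Fin 3 → ℝ) :
    crossProduct ![-(p 0) / 2, p 1 / 2, -β] ![p 0, p 1, 2 * p 2]
      = ![p 1 * p 2 + β * p 1, p 0 * p 2 - β * p 0, -(p 0 * p 1)] := by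
  rw [cross_apply]
  funext i
  fin_cases i <;> simp <;> ring

theorem rikitake_cross_product_realization_general (β : ℝ) (p : Fin 3 → ℝ) :
    grad (rikiI2 β) p = ![-(p 0) / 2, p 1 / 2, -β] ∧
    grad rikiI1 p = ![p 0, p 1, 2 * p 2] ∧
    crossProduct ![-(p 0) / 2, p 1 / 2, -β] ![p 0, p 1, 2 * p 2]
      = ![p 1 * p 2 + β * p 1, p 0 * p 2 - β * p 0, -(p 0 * p 1)] ∧
    Riki β p = crossProduct (grad (rikiI2 β) p) (grad rikiI1 p) := by
  refine ⟨grad_rikiI2 β p, grad_rikiI1 p, crossProduct_rikitake_gradients β p, ?_⟩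
  rw [grad_rikiI2, grad_rikiI1, crossProduct_rikitake_gradients]
  rfl

/-- Hamiltonian realization of the Rikitake system with rescaling function
`ν ≡ −1`: `X_β = ∇I₂^β × ∇I₁`, with the explicit gradients and cross product. -/
theorem rikitake_cross_product_realization (β : ℝ) (hβ : β ≠ 0) (p : Fin 3 → ℝ) :
    grad (rikiI2 β) p = ![-(p 0) / 2, p 1 / 2, -β] ∧
    grad rikiI1 p = ![p 0, p 1, 2 * p 2] ∧
    crossProduct ![-(p 0) / 2, p 1 / 2, -β] ![p 0, p 1, 2 * p 2]
      = ![p 1 * p 2 + β * p 1, p 0 * p 2 - β * p 0, -(p 0 * p 1)] ∧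
    Riki β p = crossProduct (grad (rikiI2 β) p) (grad rikiI1 p) :=
  rikitake_cross_product_realization_general β p
end

section
/- The functions I₁ and I₂^β are first integrals of the Rikitake system: for every interval J ⊆ ℝ and every differentiable curve f : J → ℝ³ with f′(t) = X_β(f(t)) for all t ∈ J, the functions t ↦ I₁(f(t)) and t ↦ I₂^β(f(t)) are constant on J. -/
open Matrix

/-!
Both functions have vanishing Lie derivative along `X_β`: for `I₁` the terms
`x(yz + βy) + y(xz − βx) − 2xyz` cancel, and for `I₂^β` so do
`−½x(yz + βy) + ½y(xz − βx) + βxy`. Hence `I ∘ f` has zero derivative on the interval `J`,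
and the mean value inequality makes it constant.
-/

theorem Set.OrdConnected.is_const_of_hasDerivWithinAt_zero {F : Type*} [NormedAddCommGroup F]
    [NormedSpace ℝ F] {g : ℝ → F} {J : Set ℝ} (hJ : J.OrdConnected)
    (hg : ∀ t ∈ J, HasDerivWithinAt g 0 J t) {s t : ℝ} (hs : s ∈ J) (ht : t ∈ J) :
    g s = g t := by
  have h := Convex.norm_image_sub_le_of_norm_hasDerivWithin_le hg (fun _ _ => norm_zero.le)
    hJ.convex hs ht
  rw [zero_mul, norm_le_zero_iff, sub_eq_zero] at h
  exact h.symm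

theorem Set.OrdConnected.eq_of_fderiv_apply_eq_zero {E : Type*} [NormedAddCommGroup E]
    [NormedSpace ℝ E] {X : E → E} {I : E → ℝ} (hI : Differentiable ℝ I)
    (hIX : ∀ p, fderiv ℝ I p (X p) = 0) {J : Set ℝ} (hJ : J.OrdConnected) {f : ℝ → E}
    (hf : ∀ t ∈ J, HasDerivWithinAt f (X (f t)) J t) {s t : ℝ} (hs : s ∈ J) (ht : t ∈ J) :
    I (f s) = I (f t) :=
  hJ.is_const_of_hasDerivWithinAt_zero
    (fun u hu => hIX (f u) ▸ (hI (f u)).hasFDerivAt.comp_hasDerivWithinAt u (hf u hu)) hs ht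

theorem differentiable_rikiI1 : Differentiable ℝ rikiI1 := by
  unfold rikiI1; fun_prop

theorem differentiable_rikiI2 (β : ℝ) : Differentiable ℝ (rikiI2 β) := by
  unfold rikiI2; fun_prop

theorem fderiv_rikiI1_apply_Riki (β : ℝ) (p : Fin 3 → ℝ) :
    fderiv ℝ rikiI1 p (Riki β p) = 0 := by
  have hx := hasFDerivAt_apply (𝕜 := ℝ) (F' := fun _ => ℝ) 0 p
  have hy := hasFDerivAt_apply (𝕜 := ℝ) (F' := fun _ => ℝ) 1 p
  have hz := hasFDerivAt_apply (𝕜 := ℝ) (F' := fun _ => ℝ) 2 p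
  have h : HasFDerivAt rikiI1 _ p :=
    (((hx.pow 2).add (hy.pow 2)).const_mul (1 / 2 : ℝ)).add (hz.pow 2)
  rw [h.fderiv]
  simp only [Riki, _root_.add_apply, _root_.smul_apply,
    ContinuousLinearMap.proj_apply, cons_val_zero, cons_val_one, cons_val, smul_eq_mul, nsmul_eq_mul]
  ring

theorem fderiv_rikiI2_apply_Riki (β : ℝ) (p : Fin 3 → ℝ) :
    fderiv ℝ (rikiI2 β) p (Riki β p) = 0 := by
  have hx := hasFDerivAt_apply (𝕜 := ℝ) (F' := fun _ => ℝ) 0 p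
  have hy := hasFDerivAt_apply (𝕜 := ℝ) (F' := fun _ => ℝ) 1 p
  have hz := hasFDerivAt_apply (𝕜 := ℝ) (F' := fun _ => ℝ) 2 p
  have h : HasFDerivAt (rikiI2 β) _ p :=
    (((hx.pow 2).neg.add (hy.pow 2)).const_mul (1 / 4 : ℝ)).sub (hz.const_mul β)
  rw [h.fderiv]
  simp only [Riki, _root_.add_apply, _root_.sub_apply,
    _root_.neg_apply, _root_.smul_apply, ContinuousLinearMap.proj_apply,
    cons_val_zero, cons_val_one, cons_val, smul_eq_mul, nsmul_eq_mul]
  ring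

theorem rikitake_first_integrals_general (β : ℝ)
    (J : Set ℝ) (hJ : J.OrdConnected) (f : ℝ → Fin 3 → ℝ)
    (hf : ∀ t ∈ J, HasDerivWithinAt f (Riki β (f t)) J t) :
    ∀ s ∈ J, ∀ t ∈ J, rikiI1 (f s) = rikiI1 (f t) ∧ rikiI2 β (f s) = rikiI2 β (f t) :=
  fun _ hs _ ht =>
    ⟨hJ.eq_of_fderiv_apply_eq_zero differentiable_rikiI1 (fderiv_rikiI1_apply_Riki β) hf hs ht,
      hJ.eq_of_fderiv_apply_eq_zero (differentiable_rikiI2 β) (fderiv_rikiI2_apply_Riki β) hf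
        hs ht⟩

/-- `I₁` and `I₂^β` are first integrals of the Rikitake system: they are
constant along every solution curve defined on an interval `J ⊆ ℝ`. -/
theorem rikitake_first_integrals (β : ℝ) (hβ : β ≠ 0)
    (J : Set ℝ) (hJ : J.OrdConnected) (f : ℝ → Fin 3 → ℝ)
    (hf : ∀ t ∈ J, HasDerivWithinAt f (Riki β (f t)) J t) :
    ∀ s ∈ J, ∀ t ∈ J, rikiI1 (f s) = rikiI1 (f t) ∧ rikiI2 β (f s) = rikiI2 β (f t) :=
  rikitake_first_integrals_general β J hJ f hf
end

section
/- Let β ≠ 0 and M ∈ ℝ with M² ≠ β². Define F : ℝ³ → ℝ by F(x, y, z) = I₁(x, y, z) + (2M/β)·I₂^β(x, y, z) = ((β − M)/(2β))x² + ((β + M)/(2β))y² + z² − 2Mz. Then: (i) ∇F(0, 0, M) = 0; (ii) the Hessian matrix Hess F(0,0,M) is invertible with det(Hess F(0,0,M)) = 2(β² − M²)/β²; and (iii) the associated scalar quantity for the realization with rescaling function ν ≡ −1 and Casimir C_β := I₂^β equals I_{X_β}(0,0,M) := (−1)² · det(Hess F(0,0,M)) · ⟨(Hess F(0,0,M))⁻¹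 ∇C_β(0,0,M), ∇C_β(0,0,M)⟩ = β² − M². -/
/-!
At `(0, 0, M)` the function `F` is a quadratic form with diagonal Hessian
`diag((β - M)/β, (β + M)/β, 2)` plus a linear term, and the gradient of the Casimir `I₂^β` there
is `-β e₃`. Since `det H · H⁻¹` is the adjugate of `H`, the scalar quantity is `β²` times the
`(3, 3)` cofactor of `H`, i.e. `β² · (β - M)(β + M)/β² = β² - M²`.
-/

open Matrix

section DiagonalQuadratic

variable {n : ℕ} (a d : Fin n → ℝ)

def diagQuadratic (p : Fin n → ℝ) : ℝ := ∑ i, (a i * p i ^ 2 + d i * p i)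

theorem diagQuadratic_fin_three (a₀ a₁ a₂ d₀ d₁ d₂ : ℝ) (p : Fin 3 → ℝ) :
    diagQuadratic ![a₀, a₁, a₂] ![d₀, d₁, d₂] p
      = a₀ * p 0 ^ 2 + d₀ * p 0 + (a₁ * p 1 ^ 2 + d₁ * p 1) + (a₂ * p 2 ^ 2 + d₂ * p 2) := by
  simp [diagQuadratic, Fin.sum_univ_three]

theorem hasFDerivAt_diagQuadratic (x : Fin n → ℝ) :
    HasFDerivAt (diagQuadratic a d)
      (∑ i, (2 * a i * x i + d i) • ContinuousLinearMap.proj (R := ℝ) (φ := fun _ => ℝ) i) x := by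
  refine HasFDerivAt.fun_sum fun i _ => ?_
  have hi := hasFDerivAt_apply (𝕜 := ℝ) i x
  refine (((hi.pow 2).const_mul (a i)).fun_add (hi.const_mul (d i))).congr_fderiv ?_
  ext v
  simp only [_root_.add_apply, _root_.smul_apply, ContinuousLinearMap.proj_apply, smul_eq_mul]
  norm_num
  ring

theorem fderiv_diagQuadratic_single (x : Fin n → ℝ) (j : Fin n) :
    fderiv ℝ (diagQuadratic a d) x (Pi.single j 1) = 2 * a j * x j + d j := by
  simp [(hasFDerivAt_diagQuadratic a d x).fderiv, Pi.single_apply]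

theorem grad_diagQuadratic (x : Fin n → ℝ) :
    grad (diagQuadratic a d) x = fun j => 2 * a j * x j + d j :=
  funext (fderiv_diagQuadratic_single a d x)

theorem hess_diagQuadratic (x : Fin n → ℝ) :
    hess (diagQuadratic a d) x = diagonal fun i => 2 * a i := by
  ext i j
  have hj : HasFDerivAt (fun y : Fin n → ℝ => 2 * a j * y j + d j)
      ((2 * a j) • ContinuousLinearMap.proj (R := ℝ) (φ := fun _ => ℝ) j) x :=
    ((hasFDerivAt_apply j x).const_mul _).add_const _
  simp only [hess, of_apply, fderiv_diagQuadratic_single, hj.fderiv]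
  rcases eq_or_ne i j with rfl | hij
  · simp
  · simp [hij, Ne.symm hij]

end DiagonalQuadratic

theorem Matrix.det_mul_inv_mulVec_dotProduct {ι α : Type*} [Fintype ι] [DecidableEq ι]
    [CommRing α] {A : Matrix ι ι α} (hA : IsUnit A.det) (v : ι → α) :
    A.det * (A⁻¹ *ᵥ v ⬝ᵥ v) = A.adjugate *ᵥ v ⬝ᵥ v := by
  rw [← smul_eq_mul, ← smul_dotProduct, det_smul_inv_mulVec_eq_cramer _ _ hA,
    cramer_eq_adjugate_mulVec]

theorem Matrix.adjugate_diagonal_mulVec_single_dotProduct_single {ι α : Type*} [Fintype ι]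
    [DecidableEq ι] [CommRing α] (a : ι → α) (k : ι) (c : α) :
    (diagonal a).adjugate *ᵥ Pi.single k c ⬝ᵥ Pi.single k c
      = (∏ j ∈ Finset.univ.erase k, a j) * c ^ 2 := by
  simp [mulVec_single]
  ring

/-- For the Rikitake system realized with `ν ≡ −1` and Casimir
`C_β := I₂^β`: the function `F = I₁ + (2M/β)·I₂^β` has a critical point at `(0,0,M)`, its
Hessian there is invertible with determinant `2(β² − M²)/β²`, and the associated scalar
quantity equals `β² − M²`. -/
theorem rikitake_scalar_quantity (β M : ℝ) (hβ : β ≠ 0) (hM : M ^ 2 ≠ β ^ 2)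
    (F : (Fin 3 → ℝ) → ℝ) (hF : F = fun p => rikiI1 p + (2 * M / β) * rikiI2 β p) :
    (∀ p : Fin 3 → ℝ, F p = (β - M) / (2 * β) * (p 0) ^ 2 + (β + M) / (2 * β) * (p 1) ^ 2
        + (p 2) ^ 2 - 2 * M * p 2) ∧
    grad F ![0, 0, M] = 0 ∧
    (hess F ![0, 0, M]).det = 2 * (β ^ 2 - M ^ 2) / β ^ 2 ∧
    (hess F ![0, 0, M]).det ≠ 0 ∧
    (-1 : ℝ) ^ 2 * (hess F ![0, 0, M]).det *
        (((hess F ![0, 0, M])⁻¹ *ᵥ grad (rikiI2 β) ![0, 0, M]) ⬝ᵥ grad (rikiI2 β) ![0, 0, M])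
      = β ^ 2 - M ^ 2 := by
  have hF' : F = diagQuadratic ![(β - M) / (2 * β), (β + M) / (2 * β), 1] ![0, 0, -(2 * M)] := by
    subst hF
    funext p
    rw [diagQuadratic_fin_three, rikiI1, rikiI2]
    field_simp
    ring
  have hC : rikiI2 β = diagQuadratic ![-(1 / 4), 1 / 4, 0] ![0, 0, -β] := by
    funext p
    rw [diagQuadratic_fin_three, rikiI2]
    ring
  have hgradC : grad (rikiI2 β) ![0, 0, M] = Pi.single 2 (-β) := by
    rw [hC, grad_diagQuadratic]
    funext i; fin_cases i <;> simp
  have hdet : (hess F ![0, 0, M]).det = 2 * (β ^ 2 - M ^ 2) / β ^ 2 := by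
    rw [hF', hess_diagQuadratic, det_diagonal, Fin.prod_univ_three]
    simp only [Fin.isValue, cons_val_zero, cons_val_one, cons_val_two, Nat.succ_eq_add_one,
      Nat.reduceAdd, tail_cons, head_cons]
    field_simp
    ring
  have hdet0 : (hess F ![0, 0, M]).det ≠ 0 := by
    rw [hdet]
    exact div_ne_zero (mul_ne_zero two_ne_zero (sub_ne_zero.mpr hM.symm)) (pow_ne_zero 2 hβ)
  refine ⟨fun p => by rw [hF', diagQuadratic_fin_three]; ring, ?_, hdet, hdet0, ?_⟩
  · rw [hF', grad_diagQuadratic]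
    funext i; fin_cases i <;> simp
  · rw [neg_one_sq, one_mul, det_mul_inv_mulVec_dotProduct hdet0.isUnit, hgradC, hF',
      hess_diagQuadratic, adjugate_diagonal_mulVec_single_dotProduct_single,
      show Finset.univ.erase (2 : Fin 3) = {0, 1} by decide, Finset.prod_pair (by decide)]
    simp only [Fin.isValue, cons_val_zero, cons_val_one, Nat.succ_eq_add_one, Nat.reduceAdd,
      even_two, Even.neg_pow]
    field_simp
    ring
end

section
/- Let β ≠ 0 and M ∈ ℝ, and consider the equilibrium point (0, 0, M) of the Rikitake vector field X_β. Then: (1) if |β| < |M|, the equilibrium (0, 0, M) is unstable (not Lyapunov stable); (2) if |β| > |M|, the equilibrium (0, 0, M) is Lyapunov stable. -/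
open Matrix

/-!
Stability: `W = β² I₁ + 2βM I₂` is a first integral with
`W q - W (0,0,M) = ½β(β - M) x² + ½β(β + M) y² + β² (z - M)²`, which is positive definite when
`|M| < |β|`, and a conserved quantity with a strict minimum at an equilibrium makes it stable.

Instability: the symmetries `(x, y, z) ↦ (y, x, z)` and `(x, y, z) ↦ (x, -y, -z)`, which conjugate
`X_β` to `X_{-β}`, reduce the claim to `0 < β < M`. There the level set of `(I₁, I₂)` through
`(0,0,M)` carries an explicit homoclinic orbit, which tends to `(0,0,M)` in backward time and
passes through a point with `z = 2β - M`; its time translates start arbitrarily close to the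
equilibrium and all reach that point.
-/

open Set Filter Topology Metric Real

def IsForwardSolution (X : (Fin 3 → ℝ) → Fin 3 → ℝ) (f : ℝ → Fin 3 → ℝ) : Prop :=
  ∀ t, 0 ≤ t → HasDerivWithinAt f (X (f t)) (Ici 0) t

theorem eq_of_forall_hasDerivWithinAt_Ici_zero {g : ℝ → ℝ}
    (hg : ∀ s, 0 ≤ s → HasDerivWithinAt g 0 (Ici 0) s) {t : ℝ} (ht : 0 ≤ t) : g t = g 0 :=
  constant_of_has_deriv_right_zero
    (fun s hs => (hg s hs.1).continuousWithinAt.mono Icc_subset_Ici_self)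
    (fun s hs => (hg s hs.1).mono (Ici_subset_Ici.mpr hs.1)) t (right_mem_Icc.mpr ht)

section LyapunovStability

variable {X : (Fin 3 → ℝ) → Fin 3 → ℝ} {p : Fin 3 → ℝ}

theorem lyapunovStable3_of_strictLocalMin {W : (Fin 3 → ℝ) → ℝ} (hW : Continuous W)
    (hmin : ∀ᶠ q in 𝓝[≠] p, W p < W q)
    (hW_le : ∀ f, IsForwardSolution X f → ∀ t, 0 ≤ t → W (f t) ≤ W (f 0)) :
    LyapunovStable3 X p := by
  intro U hU hpU
  obtain ⟨ε, hε, hεU⟩ := Metric.isOpen_iff.mp hU p hpU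
  obtain ⟨r, hr, hrmin⟩ := Metric.eventually_nhds_iff_ball.mp (eventually_nhdsWithin_iff.mp hmin)
  set ρ := min ε r / 2
  have hρ : 0 < ρ := by positivity
  have hρU : ball p ρ ⊆ U := (ball_subset_ball (by grind)).trans hεU
  obtain ⟨q, hq, hq_min⟩ := (isCompact_sphere p ρ).exists_isMinOn
    (NormedSpace.sphere_nonempty.mpr hρ.le) hW.continuousOn
  have hq_dist : dist q p = ρ := mem_sphere.mp hq
  have hpq : W p < W q := hrmin q (mem_ball.mpr (by grind)) (by rintro rfl; simp [hρ.ne] at hq_dist)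
  refine ⟨ball p ρ ∩ W ⁻¹' Iio (W q), inter_subset_left.trans hρU,
    isOpen_ball.inter (isOpen_Iio.preimage hW), ⟨mem_ball_self hρ, hpq⟩, ?_⟩
  rintro f ⟨hf₀, hWf₀⟩ hf t ht
  have hf_ne : ∀ s ∈ Icc 0 t, dist (f s) p ≠ ρ := fun s hs hs_dist =>
    (hq_min (mem_sphere.mpr hs_dist)).not_gt ((hW_le f hf s hs.1).trans_lt hWf₀)
  have hf_cont : ContinuousOn (fun s => dist (f s) p) (Icc 0 t) :=
    (continuous_id.dist continuous_const).comp_continuousOn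
      fun s hs => (hf s hs.1).continuousWithinAt.mono Icc_subset_Ici_self
  refine hρU (mem_ball.mpr (not_le.mp fun hft => ?_))
  obtain ⟨s, hs, hs_dist⟩ := intermediate_value_Icc ht hf_cont ⟨(mem_ball.mp hf₀).le, hft⟩
  exact hf_ne s hs hs_dist

theorem not_lyapunovStable3_of_tendsto_atBot {g : ℝ → Fin 3 → ℝ}
    (hg : ∀ t, HasDerivAt g (X (g t)) t) (hlim : Tendsto g atBot (𝓝 p)) {t₀ : ℝ}
    (ht₀ : g t₀ ≠ p) : ¬ LyapunovStable3 X p := by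
  intro hX
  obtain ⟨V, -, hV, hpV, hsol⟩ :=
    hX (ball p (dist (g t₀) p)) isOpen_ball (mem_ball_self (dist_pos.mpr ht₀))
  obtain ⟨c, hcV, hct₀⟩ :=
    ((hlim.eventually (hV.mem_nhds hpV)).and (eventually_le_atBot t₀)).exists
  have := hsol (fun t => g (t + c)) (by rwa [zero_add])
    (fun t _ => ((hg (t + c)).comp_add_const t c).hasDerivWithinAt) (t₀ - c) (by linarith)
  simp at this

theorem LyapunovStable3.of_conj {X' : (Fin 3 → ℝ) → Fin 3 → ℝ}
    (σ : (Fin 3 → ℝ) →L[ℝ] Fin 3 → ℝ) (hσ : ∀ q, σ (σ q) = q) (hX : ∀ q, X (σ q) = σ (X' q))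
    (h : LyapunovStable3 X (σ p)) : LyapunovStable3 X' p := by
  intro U hU hpU
  obtain ⟨V, hVU, hV, hpV, hsol⟩ := h (σ ⁻¹' U) (hU.preimage σ.continuous) (by simpa [hσ])
  refine ⟨σ ⁻¹' V, fun q hq => by simpa [hσ] using hVU hq, hV.preimage σ.continuous, hpV,
    fun f hf₀ hf t ht => ?_⟩
  have hσf : IsForwardSolution X (σ ∘ f) := fun s hs => by
    simpa [hX] using σ.hasFDerivAt.comp_hasDerivWithinAt s (hf s hs)
  simpa [hσ] using hsol (σ ∘ f) hf₀ hσf t ht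

theorem lyapunovStable3_conj_iff {X' : (Fin 3 → ℝ) → Fin 3 → ℝ}
    (σ : (Fin 3 → ℝ) →L[ℝ] Fin 3 → ℝ) (hσ : ∀ q, σ (σ q) = q) (hX : ∀ q, X (σ q) = σ (X' q)) :
    LyapunovStable3 X (σ p) ↔ LyapunovStable3 X' p := by
  refine ⟨.of_conj σ hσ hX, fun h => .of_conj σ hσ (fun q => ?_) (by rwa [hσ])⟩
  rw [← hσ (X' (σ q)), ← hX, hσ]

end LyapunovStability

section Rikitake

variable {β M : ℝ}

theorem IsForwardSolution.rikiI1_eq {f : ℝ → Fin 3 → ℝ} (hf : IsForwardSolution (Riki β) f)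
    {t : ℝ} (ht : 0 ≤ t) : rikiI1 (f t) = rikiI1 (f 0) := by
  refine eq_of_forall_hasDerivWithinAt_Ici_zero (g := fun u => rikiI1 (f u)) (fun s hs => ?_) ht
  have hfi := hasDerivWithinAt_pi.mp (hf s hs)
  refine (((((hfi 0).pow 2).add ((hfi 1).pow 2)).const_mul (1 / 2)).add
    ((hfi 2).pow 2)).congr_deriv ?_
  simp only [Riki, Matrix.cons_val]
  ring

theorem IsForwardSolution.rikiI2_eq {f : ℝ → Fin 3 → ℝ} (hf : IsForwardSolution (Riki β) f)
    {t : ℝ} (ht : 0 ≤ t) : rikiI2 β (f t) = rikiI2 β (f 0) := by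
  refine eq_of_forall_hasDerivWithinAt_Ici_zero (g := fun u => rikiI2 β (f u)) (fun s hs => ?_) ht
  have hfi := hasDerivWithinAt_pi.mp (hf s hs)
  refine (((((hfi 0).pow 2).neg.add ((hfi 1).pow 2)).const_mul (1 / 4)).sub
    ((hfi 2).const_mul β)).congr_deriv ?_
  simp only [Riki, Matrix.cons_val]
  ring

theorem riki_lyapunovStable (h : |M| < |β|) : LyapunovStable3 (Riki β) ![0, 0, M] := by
  set W : (Fin 3 → ℝ) → ℝ := fun q => β ^ 2 * rikiI1 q + 2 * β * M * rikiI2 β q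
  have hW : ∀ q, W q - W ![0, 0, M] =
      β * (β - M) / 2 * q 0 ^ 2 + β * (β + M) / 2 * q 1 ^ 2 + β ^ 2 * (q 2 - M) ^ 2 := by
    intro q
    simp only [W, rikiI1, rikiI2, Matrix.cons_val]
    ring
  have hβM : |β * M| < β ^ 2 := by
    rw [abs_mul, ← sq_abs, sq]
    exact mul_lt_mul_of_pos_left h ((abs_nonneg M).trans_lt h)
  have h₁ : 0 < β * (β - M) := by nlinarith [le_abs_self (β * M)]
  have h₂ : 0 < β * (β + M) := by nlinarith [neg_abs_le (β * M)]
  have h₃ : 0 < β ^ 2 := by nlinarith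
  refine lyapunovStable3_of_strictLocalMin (W := W) (by simp only [W, rikiI1, rikiI2]; fun_prop)
    ?_ fun f hf t ht => ?_
  · refine eventually_nhdsWithin_of_forall fun q hq => sub_pos.mp ?_
    have : q 0 ≠ 0 ∨ q 1 ≠ 0 ∨ q 2 - M ≠ 0 := by
      contrapose! hq
      obtain ⟨h0, h1, h2⟩ := hq
      exact not_not.mpr (funext fun i => by fin_cases i <;> simp [h0, h1, sub_eq_zero.mp h2])
    rw [hW]
    rcases this with h | h | h <;> positivity
  · simp only [W, hf.rikiI1_eq ht, hf.rikiI2_eq ht, le_refl]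

/-- On the level set of `(rikiI1, rikiI2 β)` through `(0,0,M)`, `w = M - z` obeys
`w' = w √((2(M + β) - w)(2(M - β) - w))`; integrating this with `s = exp (ω t)` gives the curve
below, for `ω = √(M² - β²)` and `A = √(8β(M - β))`. -/
noncomputable def rikiHomoclinic (β M ω A s : ℝ) : Fin 3 → ℝ :=
  ![A * (M + β) * s * (s ^ 2 + 1) / (β * (s ^ 4 + 1) + 2 * M * s ^ 2),
    A * ω * s * (1 - s ^ 2) / (β * (s ^ 4 + 1) + 2 * M * s ^ 2),
    M - 4 * (M ^ 2 - β ^ 2) * s ^ 2 / (β * (s ^ 4 + 1) + 2 * M * s ^ 2)]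

theorem hasDerivAt_rikiHomoclinic (hβ : 0 < β) (hM : 0 ≤ M) {ω A : ℝ}
    (hω : ω ^ 2 = M ^ 2 - β ^ 2) (hA : A ^ 2 = 8 * β * (M - β)) (t : ℝ) :
    HasDerivAt (fun t => rikiHomoclinic β M ω A (exp (ω * t)))
      (Riki β (rikiHomoclinic β M ω A (exp (ω * t)))) t := by
  have hs : HasDerivAt (fun t => exp (ω * t)) (exp (ω * t) * ω) t := by
    simpa using ((hasDerivAt_id t).const_mul ω).exp
  have hE := (((hs.pow 4).add_const 1).const_mul β).add ((hs.pow 2).const_mul (2 * M))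
  have hE₀ : β * (exp (ω * t) ^ 4 + 1) + 2 * M * exp (ω * t) ^ 2 ≠ 0 := by positivity
  have hx := ((hs.const_mul (A * (M + β))).mul ((hs.pow 2).add_const 1)).div hE hE₀
  have hy := ((hs.const_mul (A * ω)).mul ((hs.pow 2).const_sub 1)).div hE hE₀
  have hz := (((hs.pow 2).const_mul (4 * (M ^ 2 - β ^ 2))).div hE hE₀).const_sub M
  refine hasDerivAt_pi.mpr fun i => ?_
  fin_cases i <;> [refine hx.congr_deriv ?_; refine hy.congr_deriv ?_; refine hz.congr_deriv ?_]
  all_goals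
    simp only [Riki, rikiHomoclinic, Pi.add_apply, Pi.mul_apply, Pi.pow_apply, Fin.zero_eta,
      Fin.mk_one, Fin.reduceFinMk, Matrix.cons_val]
    field_simp
  · ring
  · rw [hω]; ring
  · rw [hA]; ring

theorem tendsto_rikiHomoclinic_atBot (hβ : 0 < β) (hM : 0 ≤ M) {ω : ℝ} (hω : 0 < ω) (A : ℝ) :
    Tendsto (fun t => rikiHomoclinic β M ω A (exp (ω * t))) atBot (𝓝 ![0, 0, M]) := by
  have hcont : Continuous (rikiHomoclinic β M ω A) := by
    refine continuous_pi fun i => ?_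
    fin_cases i <;> simp only [rikiHomoclinic] <;> fun_prop (disch := intros; positivity)
  have h₀ : rikiHomoclinic β M ω A 0 = ![0, 0, M] := by simp [rikiHomoclinic]
  rw [← h₀]
  exact (hcont.tendsto 0).comp (tendsto_exp_atBot.comp (tendsto_id.const_mul_atBot hω))

theorem riki_not_lyapunovStable_of_pos_of_lt (hβ : 0 < β) (hβM : β < M) :
    ¬ LyapunovStable3 (Riki β) ![0, 0, M] := by
  have hM : 0 ≤ M := by linarith
  set ω := √(M ^ 2 - β ^ 2)
  set A := √(8 * β * (M - β))
  have hω : 0 < ω := Real.sqrt_pos.mpr (by nlinarith)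
  refine not_lyapunovStable3_of_tendsto_atBot (t₀ := 0)
    (hasDerivAt_rikiHomoclinic hβ hM (Real.sq_sqrt (by nlinarith)) (Real.sq_sqrt (by nlinarith)))
    (tendsto_rikiHomoclinic_atBot hβ hM hω A) fun h => ?_
  have h₂ : rikiHomoclinic β M ω A 1 2 = M := by simpa using congrFun h 2
  simp only [rikiHomoclinic, Matrix.cons_val] at h₂
  field_simp at h₂
  nlinarith

open ContinuousLinearMap in
noncomputable def swapXY : (Fin 3 → ℝ) →L[ℝ] Fin 3 → ℝ := pi ![proj 1, proj 0, proj 2]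

open ContinuousLinearMap in
noncomputable def negYZ : (Fin 3 → ℝ) →L[ℝ] Fin 3 → ℝ := pi ![proj 0, -proj 1, -proj 2]

theorem swapXY_apply (q : Fin 3 → ℝ) : swapXY q = ![q 1, q 0, q 2] := by
  ext i; fin_cases i <;> rfl

theorem negYZ_apply (q : Fin 3 → ℝ) : negYZ q = ![q 0, -q 1, -q 2] := by
  ext i; fin_cases i <;> rfl

theorem swapXY_swapXY (q : Fin 3 → ℝ) : swapXY (swapXY q) = q := by
  ext i; fin_cases i <;> rfl

theorem negYZ_negYZ (q : Fin 3 → ℝ) : negYZ (negYZ q) = q := by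
  ext i; fin_cases i <;> simp [negYZ_apply]

theorem riki_swapXY (q : Fin 3 → ℝ) : Riki β (swapXY q) = swapXY (Riki (-β) q) := by
  simp only [Riki, swapXY_apply, Matrix.cons_val]
  exact Matrix.vec3_eq (by ring) (by ring) (by ring)

theorem riki_negYZ (q : Fin 3 → ℝ) : Riki β (negYZ q) = negYZ (Riki (-β) q) := by
  simp only [Riki, negYZ_apply, Matrix.cons_val]
  exact Matrix.vec3_eq (by ring) (by ring) (by ring)

theorem riki_lyapunovStable_neg_iff :
    LyapunovStable3 (Riki (-β)) ![0, 0, M] ↔ LyapunovStable3 (Riki β) ![0, 0, M] := by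
  simpa [swapXY_apply] using
    lyapunovStable3_conj_iff (p := ![0, 0, M]) swapXY swapXY_swapXY (riki_swapXY (β := -β))

theorem riki_lyapunovStable_neg_neg_iff :
    LyapunovStable3 (Riki (-β)) ![0, 0, -M] ↔ LyapunovStable3 (Riki β) ![0, 0, M] := by
  simpa [negYZ_apply] using
    lyapunovStable3_conj_iff (p := ![0, 0, M]) negYZ negYZ_negYZ (riki_negYZ (β := -β))

theorem riki_lyapunovStable_abs_iff :
    LyapunovStable3 (Riki |β|) ![0, 0, |M|] ↔ LyapunovStable3 (Riki β) ![0, 0, M] := by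
  rcases abs_cases β with ⟨hβ, -⟩ | ⟨hβ, -⟩ <;> rcases abs_cases M with ⟨hM, -⟩ | ⟨hM, -⟩ <;>
    simp only [hβ, hM]
  · exact riki_lyapunovStable_neg_iff.symm.trans riki_lyapunovStable_neg_neg_iff
  · exact riki_lyapunovStable_neg_iff
  · exact riki_lyapunovStable_neg_neg_iff

end Rikitake

/-- Stability of the equilibria `(0,0,M)` of the Rikitake system:
unstable if `|β| < |M|`, Lyapunov stable if `|β| > |M|`. -/
theorem rikitake_stability (β M : ℝ) (hβ : β ≠ 0) :
    (|β| < |M| → ¬ LyapunovStable3 (Riki β) ![0, 0, M]) ∧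
    (|M| < |β| → LyapunovStable3 (Riki β) ![0, 0, M]) := by
  refine ⟨fun h => ?_, riki_lyapunovStable⟩
  rw [← riki_lyapunovStable_abs_iff]
  exact riki_not_lyapunovStable_of_pos_of_lt (abs_pos.mpr hβ) h
end
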